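/- arXiv:2512.21164 — 5 statements merged into one kernel-verified Lean document; each statement's English description precedes it below -/
import Mathlib

section
/- Let M, N be n×n matrices with A = M + N invertible, α > 0, ω ∈ [0,2), and assume H = αI + M, S = αI + N, H + F_H and S + F_S are all invertible, where F_H and F_S are n×n perturbation matrices. Let x = A⁻¹b, let x̂, Δr, Δx be arbitrary vectors, and set r̂ = b − Ax̂ + Δr, ŷ = (2−ω)α·(S+F_S)⁻¹(H+F_H)⁻¹·r̂, and x̂⁺ = x̂ + ŷ + Δx. Define J_S = (S+F_S)⁻¹S − I and P_H = H(H+F_H)⁻¹ − I. Then the exact error recurrence holds: x − x̂⁺ = T_F(α,ω)(x − x̂) − Δx − (2−ω)α·(I+J_S)S⁻¹H⁻¹(I+P_H)·Δr − (2−ω)α·[(I+J_S)S⁻¹H⁻¹P_H·A + J_S·S⁻¹H⁻¹·A](x − x̂), where T_F(α,ω) = S⁻¹H⁻¹(α²I + MN − (1−ω)αA). -/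
open Matrix

/-- The GADI iteration matrix `T_F(α,ω) = S⁻¹ H⁻¹ (α² I + M N − (1−ω) α A)`
with `A = M + N`, `H = α I + M`, `S = α I + N`. -/
noncomputable def gadiTF {n : ℕ} (M N : Matrix (Fin n) (Fin n) ℝ) (α ω : ℝ) :
    Matrix (Fin n) (Fin n) ℝ :=
  (α • 1 + N)⁻¹ * (α • 1 + M)⁻¹ * ((α ^ 2) • 1 + M * N - ((1 - ω) * α) • (M + N))

/-- **Exact forward error recurrence of mixed precision GADI.** With
`r̂ = b − A x̂ + Δr`, `ŷ = (2−ω)α (S+F_S)⁻¹(H+F_H)⁻¹ r̂`, `x̂⁺ = x̂ + ŷ + Δx`,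
`J_S = (S+F_S)⁻¹S − I`, `P_H = H(H+F_H)⁻¹ − I`, one has
`x − x̂⁺ = T_F(x − x̂) − Δx − (2−ω)α (I+J_S)S⁻¹H⁻¹(I+P_H) Δr
  − (2−ω)α [(I+J_S)S⁻¹H⁻¹P_H A + J_S S⁻¹H⁻¹ A](x − x̂)`. -/
theorem gadi_error_recurrence {n : ℕ}
    (M N A H S F_H F_S : Matrix (Fin n) (Fin n) ℝ) (hA : A = M + N)
    (α ω : ℝ) (hα : 0 < α) (hω : ω ∈ Set.Ico (0 : ℝ) 2)
    (hH : H = α • 1 + M) (hS : S = α • 1 + N)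
    (hAinv : IsUnit A.det) (hHinv : IsUnit H.det) (hSinv : IsUnit S.det)
    (hHFinv : IsUnit (H + F_H).det) (hSFinv : IsUnit (S + F_S).det)
    (b x xh Δr Δx rh yh xhp : Fin n → ℝ)
    (hx : x = A⁻¹ *ᵥ b)
    (hrh : rh = b - A *ᵥ xh + Δr)
    (hyh : yh = ((2 - ω) * α) • (((S + F_S)⁻¹ * (H + F_H)⁻¹) *ᵥ rh))
    (hxhp : xhp = xh + yh + Δx)
    (J_S P_H : Matrix (Fin n) (Fin n) ℝ)
    (hJS : J_S = (S + F_S)⁻¹ * S - 1) (hPH : P_H = H * (H + F_H)⁻¹ - 1) :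
    x - xhp =
      gadiTF M N α ω *ᵥ (x - xh) - Δx
        - ((2 - ω) * α) • (((1 + J_S) * S⁻¹ * H⁻¹ * (1 + P_H)) *ᵥ Δr)
        - ((2 - ω) * α) •
            (((1 + J_S) * S⁻¹ * H⁻¹ * P_H * A + J_S * S⁻¹ * H⁻¹ * A) *ᵥ (x - xh)) := by
  set c : ℝ := (2 - ω) * α with hc
  have hS1 : S⁻¹ * S = 1 := nonsing_inv_mul S hSinv
  have hS2 : S * S⁻¹ = 1 := mul_nonsing_inv S hSinv
  have hH1 : H⁻¹ * H = 1 := nonsing_inv_mul H hHinv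
  have hA2 : A * A⁻¹ = 1 := mul_nonsing_inv A hAinv
  have e1 : ∀ X : Matrix (Fin n) (Fin n) ℝ, H⁻¹ * (H * X) = X := fun X => by
    rw [← mul_assoc, hH1, one_mul]
  have e2 : ∀ X : Matrix (Fin n) (Fin n) ℝ, S * (S⁻¹ * X) = X := fun X => by
    rw [← mul_assoc, hS2, one_mul]
  have hJSe : (1 : Matrix (Fin n) (Fin n) ℝ) + J_S = (S + F_S)⁻¹ * S := by
    rw [hJS]; abel
  have hPHe : (1 : Matrix (Fin n) (Fin n) ℝ) + P_H = H * (H + F_H)⁻¹ := by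
    rw [hPH]; abel
  have key1 : (1 + J_S) * S⁻¹ * H⁻¹ * (1 + P_H) = (S + F_S)⁻¹ * (H + F_H)⁻¹ := by
    rw [hJSe, hPHe]
    simp only [mul_assoc, e1, e2]
  have hT : gadiTF M N α ω = 1 - c • (S⁻¹ * H⁻¹ * A) := by
    have hHS : (α ^ 2) • (1 : Matrix (Fin n) (Fin n) ℝ) + M * N - ((1 - ω) * α) • (M + N)
        = H * S - c • A := by
      rw [hH, hS, hA]
      simp only [Matrix.add_mul, Matrix.mul_add, smul_mul_assoc, mul_smul_comm, smul_smul,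
        one_mul, mul_one, smul_add]
      module
    have h2 : S⁻¹ * H⁻¹ * (H * S) = 1 := by
      rw [mul_assoc, e1, hS1]
    rw [gadiTF, ← hH, ← hS, hHS, Matrix.mul_sub, h2, mul_smul_comm, mul_assoc]
  have key2 : (1 + J_S) * S⁻¹ * H⁻¹ * P_H * A + J_S * S⁻¹ * H⁻¹ * A
      = (S + F_S)⁻¹ * (H + F_H)⁻¹ * A - S⁻¹ * H⁻¹ * A := by
    have h1 : (1 + J_S) * S⁻¹ = (S + F_S)⁻¹ := by
      rw [hJSe, mul_assoc, hS2, mul_one]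
    rw [h1, hPH, hJS]
    simp only [Matrix.mul_sub, Matrix.sub_mul, Matrix.mul_one, Matrix.one_mul]
    simp only [mul_assoc, e1, e2]
    abel
  have hAx : A *ᵥ x = b := by
    rw [hx, mulVec_mulVec, hA2, one_mulVec]
  have hres : b - A *ᵥ xh = A *ᵥ (x - xh) := by
    rw [mulVec_sub, hAx]
  rw [hxhp, hyh, hrh, hres, key1, key2, hT]
  simp only [Matrix.sub_mulVec, Matrix.add_mulVec, Matrix.smul_mulVec, one_mulVec,
    mulVec_add, ← mulVec_mulVec, smul_add, smul_sub]
  abel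
end

section
/- Let M, N be n×n matrices with A = M + N invertible, α > 0, ω ∈ [0,2), and assume H = αI + M and S = αI + N are invertible. Let c_F = ‖I − T_F(α,ω)‖ with T_F(α,ω) = S⁻¹H⁻¹(α²I + MN − (1−ω)αA). Then ‖S⁻¹H⁻¹A‖ = c_F/(α(2−ω)) and ‖S⁻¹H⁻¹‖·‖A‖ ≤ c_F·κ(A)/(α(2−ω)). -/
open Matrix

/-- The spectral (operator 2-)norm of a real matrix. -/
noncomputable def specNorm {n : ℕ} (A : Matrix (Fin n) (Fin n) ℝ) : ℝ :=
  ‖Matrix.toEuclideanCLM (𝕜 := ℝ) A‖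

/-- The (2-norm) condition number `κ(B) = ‖B‖‖B⁻¹‖`. -/
noncomputable def condNum {n : ℕ} (A : Matrix (Fin n) (Fin n) ℝ) : ℝ :=
  specNorm A * specNorm A⁻¹

/-!
Since `α²I + MN − (1−ω)α(M+N) = HS − α(2−ω)A`, the matrix `I − T_F` equals `α(2−ω) S⁻¹H⁻¹A`,
which gives the identity. The inequality follows from `S⁻¹H⁻¹ = (S⁻¹H⁻¹A)A⁻¹` and
submultiplicativity of the spectral norm.
-/

section specNorm

variable {n : ℕ}

lemma specNorm_smul (c : ℝ) (A : Matrix (Fin n) (Fin n) ℝ) :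
    specNorm (c • A) = |c| * specNorm A := by
  rw [specNorm, map_smul, norm_smul, Real.norm_eq_abs, specNorm]

lemma specNorm_mul_le (A B : Matrix (Fin n) (Fin n) ℝ) :
    specNorm (A * B) ≤ specNorm A * specNorm B := by
  rw [specNorm, map_mul]
  exact norm_mul_le _ _

lemma specNorm_nonneg (A : Matrix (Fin n) (Fin n) ℝ) : 0 ≤ specNorm A :=
  norm_nonneg _

lemma specNorm_mul_specNorm_le_condNum {A : Matrix (Fin n) (Fin n) ℝ} (hA : IsUnit A.det)
    (B : Matrix (Fin n) (Fin n) ℝ) :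
    specNorm B * specNorm A ≤ specNorm (B * A) * condNum A := by
  have hB : B = B * A * A⁻¹ := by rw [mul_assoc, mul_nonsing_inv _ hA, mul_one]
  calc specNorm B * specNorm A
      ≤ specNorm (B * A) * specNorm A⁻¹ * specNorm A := by
        gcongr
        · exact specNorm_nonneg A
        · conv_lhs => rw [hB]
          exact specNorm_mul_le _ _
    _ = specNorm (B * A) * condNum A := by rw [condNum]; ring

end specNorm

lemma smul_one_add_mul_smul_one_add {R A : Type*} [CommRing R] [Ring A] [Algebra R A]
    (α ω : R) (M N : A) :
    (α • 1 + M) * (α • 1 + N) - (α * (2 - ω)) • (M + N) =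
      α ^ 2 • 1 + M * N - ((1 - ω) * α) • (M + N) := by
  simp only [add_mul, mul_add, smul_mul_assoc, mul_smul_comm, one_mul, mul_one]
  module

lemma one_sub_gadiTF {n : ℕ} {M N : Matrix (Fin n) (Fin n) ℝ} {α : ℝ}
    (hH : IsUnit (α • 1 + M).det) (hS : IsUnit (α • 1 + N).det) (ω : ℝ) :
    1 - gadiTF M N α ω = (α * (2 - ω)) • ((α • 1 + N)⁻¹ * (α • 1 + M)⁻¹ * (M + N)) := by
  have hHS : (α • 1 + N)⁻¹ * (α • 1 + M)⁻¹ * ((α • 1 + M) * (α • 1 + N)) = 1 := by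
    rw [mul_assoc, ← mul_assoc (α • 1 + M)⁻¹, nonsing_inv_mul _ hH, one_mul,
      nonsing_inv_mul _ hS]
  rw [gadiTF, ← smul_one_add_mul_smul_one_add, mul_sub, hHS, mul_smul_comm]
  abel

/-- **Norm identities involving `c_F = ‖I − T_F(α,ω)‖`:**
`‖S⁻¹H⁻¹A‖ = c_F/(α(2−ω))` and `‖S⁻¹H⁻¹‖‖A‖ ≤ c_F κ(A)/(α(2−ω))`. -/
theorem norm_SinvHinvA_eq {n : ℕ}
    (M N A H S : Matrix (Fin n) (Fin n) ℝ) (hA : A = M + N)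
    (α ω : ℝ) (hα : 0 < α) (hω : ω ∈ Set.Ico (0 : ℝ) 2)
    (hH : H = α • 1 + M) (hS : S = α • 1 + N)
    (hAinv : IsUnit A.det) (hHinv : IsUnit H.det) (hSinv : IsUnit S.det) :
    specNorm (S⁻¹ * H⁻¹ * A) = specNorm (1 - gadiTF M N α ω) / (α * (2 - ω)) ∧
    specNorm (S⁻¹ * H⁻¹) * specNorm A ≤
      specNorm (1 - gadiTF M N α ω) * condNum A / (α * (2 - ω)) := by
  subst hA hH hS
  have hscale : 0 < α * (2 - ω) := mul_pos hα (by linarith [hω.2])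
  have hcF : specNorm (1 - gadiTF M N α ω) =
      α * (2 - ω) * specNorm ((α • 1 + N)⁻¹ * (α • 1 + M)⁻¹ * (M + N)) := by
    rw [one_sub_gadiTF hHinv hSinv, specNorm_smul, abs_of_pos hscale]
  rw [hcF, mul_div_cancel_left₀ _ hscale.ne', mul_assoc (α * (2 - ω)),
    mul_div_cancel_left₀ _ hscale.ne']
  exact ⟨rfl, specNorm_mul_specNorm_le_condNum hAinv _⟩
end

section
/- Let M, N be n×n matrices with A = M + N, α > 0, ω ∈ [0,2), and assume H = αI + M, S = αI + N, H + F_H and S + F_S are all invertible. Define J_S = (S+F_S)⁻¹S − I, P_H = H(H+F_H)⁻¹ − I, and J_H = (H+F_H)⁻¹H − I. Then ‖(I+J_S)S⁻¹H⁻¹P_H·A + J_S·S⁻¹H⁻¹·A‖ ≤ ((1+‖J_S‖)·κ(S)·‖J_H‖ + ‖J_S‖)·‖S⁻¹H⁻¹A‖, and consequently this quantity is at most ((1+‖J_S‖)·κ(S)·‖J_H‖ + ‖J_S‖)·c_F/(α(2−ω)), where c_F = ‖I − T_F(α,ω)‖. -/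
set_option synthInstance.maxHeartbeats 400000
set_option maxHeartbeats 1000000
set_option linter.unusedVariables false


open Matrix

lemma sn_mul_le {n : ℕ} (A B : Matrix (Fin n) (Fin n) ℝ) :
    specNorm (A * B) ≤ specNorm A * specNorm B := by
  simp only [specNorm, _root_.map_mul]; exact norm_mul_le _ _

lemma sn_add_le {n : ℕ} (A B : Matrix (Fin n) (Fin n) ℝ) :
    specNorm (A + B) ≤ specNorm A + specNorm B := by
  simp only [specNorm, _root_.map_add]; exact norm_add_le _ _

lemma sn_nonneg {n : ℕ} (A : Matrix (Fin n) (Fin n) ℝ) : 0 ≤ specNorm A := norm_nonneg _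

lemma sn_smul {n : ℕ} (c : ℝ) (A : Matrix (Fin n) (Fin n) ℝ) :
    specNorm (c • A) = |c| * specNorm A := by
  simp only [specNorm, _root_.map_smul]
  rw [show c • (Matrix.toEuclideanCLM (𝕜 := ℝ) A) = c • (Matrix.toEuclideanCLM (𝕜 := ℝ) A) from rfl]
  rw [norm_smul c (Matrix.toEuclideanCLM (𝕜 := ℝ) A), Real.norm_eq_abs]

lemma sn_one_le {n : ℕ} : specNorm (1 : Matrix (Fin n) (Fin n) ℝ) ≤ 1 := by
  simp only [specNorm, _root_.map_one]
  rw [ContinuousLinearMap.one_def]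
  exact ContinuousLinearMap.norm_id_le


/-- **Perturbation-term bound via `J_H` (cf. (3.12)).** With `J_S = (S+F_S)⁻¹S − I`,
`P_H = H(H+F_H)⁻¹ − I`, `J_H = (H+F_H)⁻¹H − I`,
`‖(I+J_S)S⁻¹H⁻¹P_H A + J_S S⁻¹H⁻¹ A‖ ≤ ((1+‖J_S‖)κ(S)‖J_H‖ + ‖J_S‖)‖S⁻¹H⁻¹A‖
  ≤ ((1+‖J_S‖)κ(S)‖J_H‖ + ‖J_S‖) c_F/(α(2−ω))` with `c_F = ‖I − T_F(α,ω)‖`. -/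
theorem perturbation_term_bound_JH {n : ℕ}
    (M N A H S F_H F_S : Matrix (Fin n) (Fin n) ℝ) (hA : A = M + N)
    (α ω : ℝ) (hα : 0 < α) (hω : ω ∈ Set.Ico (0 : ℝ) 2)
    (hH : H = α • 1 + M) (hS : S = α • 1 + N)
    (hHinv : IsUnit H.det) (hSinv : IsUnit S.det)
    (hHFinv : IsUnit (H + F_H).det) (hSFinv : IsUnit (S + F_S).det)
    (J_S P_H J_H : Matrix (Fin n) (Fin n) ℝ)
    (hJS : J_S = (S + F_S)⁻¹ * S - 1) (hPH : P_H = H * (H + F_H)⁻¹ - 1)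
    (hJH : J_H = (H + F_H)⁻¹ * H - 1) :
    specNorm ((1 + J_S) * S⁻¹ * H⁻¹ * P_H * A + J_S * S⁻¹ * H⁻¹ * A) ≤
      ((1 + specNorm J_S) * condNum S * specNorm J_H + specNorm J_S) *
        specNorm (S⁻¹ * H⁻¹ * A) ∧
    specNorm ((1 + J_S) * S⁻¹ * H⁻¹ * P_H * A + J_S * S⁻¹ * H⁻¹ * A) ≤
      ((1 + specNorm J_S) * condNum S * specNorm J_H + specNorm J_S) *
        (specNorm (1 - gadiTF M N α ω) / (α * (2 - ω))) := by
  have hω2 : 0 < 2 - ω := by linarith [hω.2]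
  have hHi : H⁻¹ * H = 1 := nonsing_inv_mul H hHinv
  have hHi' : H * H⁻¹ = 1 := mul_nonsing_inv H hHinv
  have hSi : S⁻¹ * S = 1 := nonsing_inv_mul S hSinv
  have hSi' : S * S⁻¹ = 1 := mul_nonsing_inv S hSinv
  set X := S⁻¹ * H⁻¹ * A with hX
  -- key commutation: H⁻¹ * P_H = J_H * H⁻¹
  have h1 : H⁻¹ * P_H = J_H * H⁻¹ := by
    rw [hPH, hJH, mul_sub, sub_mul, mul_one, one_mul, ← mul_assoc, hHi, one_mul,
      mul_assoc, hHi', mul_one]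
  have key : (1 + J_S) * S⁻¹ * H⁻¹ * P_H * A = (1 + J_S) * (S⁻¹ * J_H * S) * X := by
    rw [hX]
    calc (1 + J_S) * S⁻¹ * H⁻¹ * P_H * A
        = (1 + J_S) * (S⁻¹ * ((H⁻¹ * P_H) * A)) := by simp only [mul_assoc]
      _ = (1 + J_S) * (S⁻¹ * (J_H * ((S * S⁻¹) * (H⁻¹ * A)))) := by
          rw [h1, hSi', one_mul, mul_assoc]
      _ = (1 + J_S) * (S⁻¹ * J_H * S) * (S⁻¹ * H⁻¹ * A) := by simp only [mul_assoc]
  have key2 : J_S * S⁻¹ * H⁻¹ * A = J_S * X := by simp only [hX, mul_assoc]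
  -- norm bounds
  have hb : specNorm (1 + J_S) ≤ 1 + specNorm J_S :=
    le_trans (sn_add_le _ _) (by linarith [sn_one_le (n := n)])
  have hc : specNorm (S⁻¹ * J_H * S) ≤ specNorm S⁻¹ * specNorm J_H * specNorm S :=
    le_trans (sn_mul_le _ _)
      (mul_le_mul_of_nonneg_right
        (le_trans (sn_mul_le _ _)
          (mul_le_mul_of_nonneg_left le_rfl (sn_nonneg _))) (sn_nonneg _))
  have hX1 : specNorm ((1 + J_S) * (S⁻¹ * J_H * S) * X) ≤
      (1 + specNorm J_S) * (specNorm S⁻¹ * specNorm J_H * specNorm S) * specNorm X := by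
    calc specNorm ((1 + J_S) * (S⁻¹ * J_H * S) * X)
        ≤ specNorm ((1 + J_S) * (S⁻¹ * J_H * S)) * specNorm X := sn_mul_le _ _
      _ ≤ specNorm (1 + J_S) * specNorm (S⁻¹ * J_H * S) * specNorm X :=
          mul_le_mul_of_nonneg_right (sn_mul_le _ _) (sn_nonneg _)
      _ ≤ (1 + specNorm J_S) * (specNorm S⁻¹ * specNorm J_H * specNorm S) * specNorm X := by
          apply mul_le_mul_of_nonneg_right _ (sn_nonneg _)
          exact mul_le_mul hb hc (sn_nonneg _) (by linarith [sn_nonneg J_S])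
  have hX2 : specNorm (J_S * X) ≤ specNorm J_S * specNorm X := sn_mul_le _ _
  have first : specNorm ((1 + J_S) * S⁻¹ * H⁻¹ * P_H * A + J_S * S⁻¹ * H⁻¹ * A) ≤
      ((1 + specNorm J_S) * condNum S * specNorm J_H + specNorm J_S) * specNorm X := by
    rw [key, key2]
    calc specNorm ((1 + J_S) * (S⁻¹ * J_H * S) * X + J_S * X)
        ≤ specNorm ((1 + J_S) * (S⁻¹ * J_H * S) * X) + specNorm (J_S * X) := sn_add_le _ _
      _ ≤ (1 + specNorm J_S) * (specNorm S⁻¹ * specNorm J_H * specNorm S) * specNorm X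
            + specNorm J_S * specNorm X := add_le_add hX1 hX2
      _ = ((1 + specNorm J_S) * condNum S * specNorm J_H + specNorm J_S) * specNorm X := by
          simp only [condNum]; ring
  refine ⟨first, ?_⟩
  -- second part: 1 - T_F = (α(2-ω)) • X
  have h2 : (α ^ 2) • (1 : Matrix (Fin n) (Fin n) ℝ) + M * N - ((1 - ω) * α) • (M + N)
      = H * S - (α * (2 - ω)) • A := by
    have hHS : H * S = (α * α) • (1 : Matrix (Fin n) (Fin n) ℝ) + α • N + α • M + M * N := by
      rw [hH, hS]
      simp only [add_mul, mul_add, smul_mul_assoc, mul_smul_comm, one_mul, mul_one, smul_smul, smul_add]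
      abel
    rw [hHS, hA]
    module
  have hT : (1 : Matrix (Fin n) (Fin n) ℝ) - gadiTF M N α ω = (α * (2 - ω)) • X := by
    have hg : gadiTF M N α ω = S⁻¹ * H⁻¹ * ((α ^ 2) • 1 + M * N - ((1 - ω) * α) • (M + N)) := by
      rw [gadiTF, ← hH, ← hS]
    rw [hg, h2, mul_sub]
    have h3 : S⁻¹ * H⁻¹ * (H * S) = 1 := by
      calc S⁻¹ * H⁻¹ * (H * S) = S⁻¹ * ((H⁻¹ * H) * S) := by simp only [mul_assoc]
        _ = 1 := by rw [hHi, one_mul, hSi]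
    rw [h3, mul_smul_comm, hX]
    abel
  have hpos : (0 : ℝ) < α * (2 - ω) := mul_pos hα hω2
  have hnorm : specNorm (1 - gadiTF M N α ω) = (α * (2 - ω)) * specNorm X := by
    rw [hT, sn_smul, abs_of_pos hpos]
  rw [hnorm, mul_div_cancel_left₀ _ (ne_of_gt hpos)]
  exact first
end

section
/- Let M, N be n×n matrices with A = M + N invertible, α > 0, ω ∈ [0,2), and assume H = αI + M, S = αI + N, H + F_H and S + F_S are all invertible. Define J_S = (S+F_S)⁻¹S − I and P_H = H(H+F_H)⁻¹ − I, and let E = (I+J_S)S⁻¹H⁻¹P_H·A + J_S·S⁻¹H⁻¹·A. Then both of the following bounds hold: (i) ‖E‖ ≤ ((1+‖J_S‖)·κ(HS)·‖P_H‖ + ‖J_S‖)·c_F/(α(2−ω)), where HS is the product matrix; and (ii) ‖E‖ ≤ ((1+‖J_S‖)·‖P_H‖ + ‖J_S‖)·c_F·κ(A)/(α(2−ω)), where c_F = ‖I − T_F(α,ω)‖. -/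
/-!
Since `HS = α²I + MN + αA`, the iteration matrix satisfies `I − T_F = α(2−ω)(HS)⁻¹A`, so
`c_F / (α(2−ω)) = ‖(HS)⁻¹A‖`. With `S⁻¹H⁻¹ = (HS)⁻¹`, bound (i) follows from submultiplicativity
after writing `A = HS · (HS)⁻¹A`, and bound (ii) after writing `(HS)⁻¹P_H A = (HS)⁻¹A · A⁻¹P_H A`;
neither estimate uses more than a submultiplicative norm.
-/

open Matrix

section NormedRing

variable {R : Type*} [NormedRing R]

lemma norm_le_norm_mul_norm_of_mul_eq_one {K G : R} (h : K * G = 1) (x : R) :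
    ‖x‖ ≤ ‖K‖ * ‖G * x‖ :=
  calc ‖x‖ = ‖K * (G * x)‖ := by rw [← mul_assoc, h, one_mul]
    _ ≤ ‖K‖ * ‖G * x‖ := norm_mul_le _ _

lemma norm_perturbation_le_of_mul_left_inv {K G : R} (h : K * G = 1) (U J P A : R) :
    ‖U * G * P * A + J * G * A‖ ≤ (‖U‖ * (‖K‖ * ‖G‖) * ‖P‖ + ‖J‖) * ‖G * A‖ := by
  have hU : ‖U * G * P * A‖ ≤ ‖U‖ * ‖G‖ * ‖P‖ * (‖K‖ * ‖G * A‖) :=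
    calc ‖U * G * P * A‖ ≤ ‖U * G * P‖ * ‖A‖ := norm_mul_le _ _
      _ ≤ _ := by gcongr; exacts [norm_mul₃_le, norm_le_norm_mul_norm_of_mul_eq_one h A]
  have hJ : ‖J * G * A‖ ≤ ‖J‖ * ‖G * A‖ := mul_assoc J G A ▸ norm_mul_le _ _
  calc _ ≤ ‖U * G * P * A‖ + ‖J * G * A‖ := norm_add_le _ _
    _ ≤ _ := add_le_add hU hJ
    _ = _ := by ring

lemma norm_perturbation_le_of_mul_right_inv {A A' : R} (h : A * A' = 1) (U J G P : R) :
    ‖U * G * P * A + J * G * A‖ ≤ (‖U‖ * ‖P‖ + ‖J‖) * (‖G * A‖ * (‖A‖ * ‖A'‖)) := by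
  have hU : ‖U * G * P * A‖ ≤ ‖U‖ * ‖G * A‖ * (‖A'‖ * ‖P‖ * ‖A‖) :=
    calc ‖U * G * P * A‖ = ‖U * (G * A) * (A' * P * A)‖ := by
          simp only [mul_assoc, ← mul_assoc A A', h, one_mul]
      _ ≤ ‖U * (G * A)‖ * ‖A' * P * A‖ := norm_mul_le _ _
      _ ≤ _ := by gcongr; exacts [norm_mul_le _ _, norm_mul₃_le]
  have hJ : ‖J * G * A‖ ≤ ‖J‖ * (‖G * A‖ * (‖A‖ * ‖A'‖)) :=
    calc ‖J * G * A‖ ≤ ‖J‖ * ‖G * A‖ := mul_assoc J G A ▸ norm_mul_le _ _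
      _ ≤ ‖J‖ * (‖A‖ * (‖A'‖ * ‖G * A‖)) := by
          gcongr
          exact (norm_le_norm_mul_norm_of_mul_eq_one h _).trans (by gcongr; exact norm_mul_le _ _)
      _ = _ := by ring
  calc _ ≤ ‖U * G * P * A‖ + ‖J * G * A‖ := norm_add_le _ _
    _ ≤ _ := add_le_add hU hJ
    _ = _ := by ring

end NormedRing

namespace Matrix

variable {n : ℕ}

lemma mul_eq_sq_smul_add (M N : Matrix (Fin n) (Fin n) ℝ) (α : ℝ) :
    (α • 1 + M) * (α • 1 + N) = (α ^ 2) • 1 + M * N + α • (M + N) := by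
  simp only [add_mul, mul_add, Matrix.smul_mul, Matrix.mul_smul, mul_one, one_mul, smul_smul]
  module

lemma one_sub_gadiTF (M N : Matrix (Fin n) (Fin n) ℝ) (α ω : ℝ)
    (hH : IsUnit (α • 1 + M).det) (hS : IsUnit (α • 1 + N).det) :
    1 - gadiTF M N α ω = (α * (2 - ω)) • (((α • 1 + M) * (α • 1 + N))⁻¹ * (M + N)) := by
  rw [gadiTF, ← mul_inv_rev, ← Matrix.mul_smul]
  set X := (α • 1 + M) * (α • 1 + N) with hX
  have hXX : X⁻¹ * X = 1 := nonsing_inv_mul X (by rw [det_mul]; exact hH.mul hS)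
  calc 1 - X⁻¹ * _ = X⁻¹ * (X - ((α ^ 2) • 1 + M * N - ((1 - ω) * α) • (M + N))) := by
        rw [mul_sub X⁻¹ X, hXX]
    _ = _ := by rw [hX, mul_eq_sq_smul_add]; congr 1; module

open scoped Norms.L2Operator

lemma specNorm_eq_norm (A : Matrix (Fin n) (Fin n) ℝ) : specNorm A = ‖A‖ := rfl

lemma l2_opNorm_one_le : ‖(1 : Matrix (Fin n) (Fin n) ℝ)‖ ≤ 1 := by
  rw [← l2_opNorm_toEuclideanCLM, map_one]
  exact ContinuousLinearMap.norm_id_le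

end Matrix

open scoped Matrix.Norms.L2Operator

theorem perturbation_term_bounds_general {n : ℕ}
    (M N A H S : Matrix (Fin n) (Fin n) ℝ) (hA : A = M + N)
    (α ω : ℝ) (hα : 0 < α) (hω : ω ∈ Set.Ico (0 : ℝ) 2)
    (hH : H = α • 1 + M) (hS : S = α • 1 + N)
    (hAinv : IsUnit A.det) (hHinv : IsUnit H.det) (hSinv : IsUnit S.det)
    (J_S P_H E : Matrix (Fin n) (Fin n) ℝ)
    (hE : E = (1 + J_S) * S⁻¹ * H⁻¹ * P_H * A + J_S * S⁻¹ * H⁻¹ * A) :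
    specNorm E ≤
      ((1 + specNorm J_S) * condNum (H * S) * specNorm P_H + specNorm J_S) *
        (specNorm (1 - gadiTF M N α ω) / (α * (2 - ω))) ∧
    specNorm E ≤
      ((1 + specNorm J_S) * specNorm P_H + specNorm J_S) *
        (specNorm (1 - gadiTF M N α ω) * condNum A / (α * (2 - ω))) := by
  have hpos : 0 < α * (2 - ω) := mul_pos hα (by linarith [hω.2])
  have hcF : specNorm (1 - gadiTF M N α ω) / (α * (2 - ω)) = ‖(H * S)⁻¹ * A‖ := by
    rw [Matrix.specNorm_eq_norm, Matrix.one_sub_gadiTF M N α ω (hH ▸ hHinv) (hS ▸ hSinv),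
      ← hH, ← hS, ← hA, norm_smul, Real.norm_of_nonneg hpos.le, mul_div_cancel_left₀ _ hpos.ne']
  have hE' : E = (1 + J_S) * (H * S)⁻¹ * P_H * A + J_S * (H * S)⁻¹ * A := by
    rw [hE, Matrix.mul_inv_rev]; simp only [mul_assoc]
  have h1J : ‖1 + J_S‖ ≤ 1 + ‖J_S‖ :=
    (norm_add_le _ _).trans (by gcongr; exact Matrix.l2_opNorm_one_le)
  rw [mul_div_right_comm, hcF]
  simp only [condNum, Matrix.specNorm_eq_norm, hE']
  constructor
  · have hHS : H * S * (H * S)⁻¹ = 1 :=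
      Matrix.mul_nonsing_inv _ (by rw [Matrix.det_mul]; exact hHinv.mul hSinv)
    refine (norm_perturbation_le_of_mul_left_inv hHS _ _ _ _).trans ?_
    gcongr
  · have hAA : A * A⁻¹ = 1 := Matrix.mul_nonsing_inv A hAinv
    refine (norm_perturbation_le_of_mul_right_inv hAA _ _ _ _).trans ?_
    gcongr

/-- **Perturbation-term bounds via `κ(HS)` and via `κ(A)` (cf. (3.10), (3.11)).**
With `E = (I+J_S)S⁻¹H⁻¹P_H A + J_S S⁻¹H⁻¹ A`:
(i) `‖E‖ ≤ ((1+‖J_S‖)κ(HS)‖P_H‖ + ‖J_S‖) c_F/(α(2−ω))`, and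
(ii) `‖E‖ ≤ ((1+‖J_S‖)‖P_H‖ + ‖J_S‖) c_F κ(A)/(α(2−ω))`, with `c_F = ‖I − T_F(α,ω)‖`. -/
theorem perturbation_term_bounds {n : ℕ}
    (M N A H S F_H F_S : Matrix (Fin n) (Fin n) ℝ) (hA : A = M + N)
    (α ω : ℝ) (hα : 0 < α) (hω : ω ∈ Set.Ico (0 : ℝ) 2)
    (hH : H = α • 1 + M) (hS : S = α • 1 + N)
    (hAinv : IsUnit A.det) (hHinv : IsUnit H.det) (hSinv : IsUnit S.det)
    (hHFinv : IsUnit (H + F_H).det) (hSFinv : IsUnit (S + F_S).det)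
    (J_S P_H E : Matrix (Fin n) (Fin n) ℝ)
    (hJS : J_S = (S + F_S)⁻¹ * S - 1) (hPH : P_H = H * (H + F_H)⁻¹ - 1)
    (hE : E = (1 + J_S) * S⁻¹ * H⁻¹ * P_H * A + J_S * S⁻¹ * H⁻¹ * A) :
    specNorm E ≤
      ((1 + specNorm J_S) * condNum (H * S) * specNorm P_H + specNorm J_S) *
        (specNorm (1 - gadiTF M N α ω) / (α * (2 - ω))) ∧
    specNorm E ≤
      ((1 + specNorm J_S) * specNorm P_H + specNorm J_S) *
        (specNorm (1 - gadiTF M N α ω) * condNum A / (α * (2 - ω))) :=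
  perturbation_term_bounds_general M N A H S hA α ω hα hω hH hS hAinv hHinv hSinv J_S P_H E hE
end

section
/- Let M, N be n×n matrices with A = M + N invertible, α > 0, ω ∈ [0,2), and assume H = αI + M, S = αI + N, H + F_H and S + F_S are all invertible. Let x = A⁻¹b, let x̂, Δr, Δx be arbitrary vectors, set r̂ = b − Ax̂ + Δr, ŷ = (2−ω)α·(S+F_S)⁻¹(H+F_H)⁻¹·r̂, x̂⁺ = x̂ + ŷ + Δx, J_S = (S+F_S)⁻¹S − I, P_H = H(H+F_H)⁻¹ − I. Then the exact residual recurrence holds: b − Ax̂⁺ = T_B(α,ω)(b − Ax̂) − A·Δx − (2−ω)α·A(I+J_S)S⁻¹H⁻¹(I+P_H)·Δr − (2−ω)α·A[(I+J_S)S⁻¹H⁻¹P_H·A + J_S·S⁻¹H⁻¹·A]·A⁻¹(b − Ax̂), where T_B(α,ω) = A·T_F(α,ω)·A⁻¹ and T_F(α,ω) = S⁻¹H⁻¹(α²I + MN − (1−ω)αA). -/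
open Matrix

/-- The similarity transform `T_B(α,ω) = A T_F(α,ω) A⁻¹` of the GADI iteration matrix. -/
noncomputable def gadiTB {n : ℕ} (M N : Matrix (Fin n) (Fin n) ℝ) (α ω : ℝ) :
    Matrix (Fin n) (Fin n) ℝ :=
  (M + N) * gadiTF M N α ω * (M + N)⁻¹

/-- **Exact residual recurrence of mixed precision GADI.** With
`r̂ = b − A x̂ + Δr`, `ŷ = (2−ω)α (S+F_S)⁻¹(H+F_H)⁻¹ r̂`, `x̂⁺ = x̂ + ŷ + Δx`,
`J_S = (S+F_S)⁻¹S − I`, `P_H = H(H+F_H)⁻¹ − I`, one has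
`b − A x̂⁺ = T_B(b − A x̂) − A Δx − (2−ω)α A(I+J_S)S⁻¹H⁻¹(I+P_H) Δr
  − (2−ω)α A[(I+J_S)S⁻¹H⁻¹P_H A + J_S S⁻¹H⁻¹ A] A⁻¹ (b − A x̂)`. -/
theorem gadi_residual_recurrence {n : ℕ}
    (M N A H S F_H F_S : Matrix (Fin n) (Fin n) ℝ) (hA : A = M + N)
    (α ω : ℝ) (hα : 0 < α) (hω : ω ∈ Set.Ico (0 : ℝ) 2)
    (hH : H = α • 1 + M) (hS : S = α • 1 + N)
    (hAinv : IsUnit A.det) (hHinv : IsUnit H.det) (hSinv : IsUnit S.det)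
    (hHFinv : IsUnit (H + F_H).det) (hSFinv : IsUnit (S + F_S).det)
    (b x xh Δr Δx rh yh xhp : Fin n → ℝ)
    (hx : x = A⁻¹ *ᵥ b)
    (hrh : rh = b - A *ᵥ xh + Δr)
    (hyh : yh = ((2 - ω) * α) • (((S + F_S)⁻¹ * (H + F_H)⁻¹) *ᵥ rh))
    (hxhp : xhp = xh + yh + Δx)
    (J_S P_H : Matrix (Fin n) (Fin n) ℝ)
    (hJS : J_S = (S + F_S)⁻¹ * S - 1) (hPH : P_H = H * (H + F_H)⁻¹ - 1) :
    b - A *ᵥ xhp =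
      gadiTB M N α ω *ᵥ (b - A *ᵥ xh) - A *ᵥ Δx
        - ((2 - ω) * α) • ((A * ((1 + J_S) * S⁻¹ * H⁻¹ * (1 + P_H))) *ᵥ Δr)
        - ((2 - ω) * α) •
            ((A * ((1 + J_S) * S⁻¹ * H⁻¹ * P_H * A + J_S * S⁻¹ * H⁻¹ * A) * A⁻¹) *ᵥ
              (b - A *ᵥ xh)) := by
  set c : ℝ := (2 - ω) * α with hcdef
  have hAc : A * A⁻¹ = 1 := Matrix.mul_nonsing_inv A hAinv
  have hHS : gadiTF M N α ω = S⁻¹ * H⁻¹ * (H * S - c • A) := by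
    rw [gadiTF, ← hS, ← hH]
    congr 1
    rw [hH, hS, hA]
    simp only [add_mul, mul_add, Matrix.smul_mul, Matrix.mul_smul, one_mul, mul_one,
      smul_smul, smul_add]
    module
  have hTF : gadiTF M N α ω = 1 - c • (S⁻¹ * (H⁻¹ * A)) := by
    rw [hHS, mul_sub, Matrix.mul_assoc, ← Matrix.mul_assoc H⁻¹ H S,
      Matrix.nonsing_inv_mul H hHinv, one_mul, Matrix.nonsing_inv_mul S hSinv,
      Matrix.mul_smul, Matrix.mul_assoc]
  have hTB : gadiTB M N α ω = 1 - c • (A * (S⁻¹ * H⁻¹)) := by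
    rw [gadiTB, ← hA, hTF]
    simp only [mul_sub, sub_mul, Matrix.mul_smul, Matrix.smul_mul, Matrix.mul_assoc,
      hAc, mul_one, one_mul]
  have hE1 : A * ((1 + J_S) * S⁻¹ * H⁻¹ * (1 + P_H)) =
      A * ((S + F_S)⁻¹ * (H + F_H)⁻¹) := by
    rw [hJS, hPH]
    simp only [add_sub_cancel, Matrix.mul_assoc,
      Matrix.mul_nonsing_inv_cancel_left _ _ hSinv,
      Matrix.nonsing_inv_mul_cancel_left _ _ hHinv, mul_one]
  have hMAIN : (1 : Matrix (Fin n) (Fin n) ℝ)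
        - c • (A * ((S + F_S)⁻¹ * (H + F_H)⁻¹)) =
      gadiTB M N α ω
        - c • (A * ((1 + J_S) * S⁻¹ * H⁻¹ * P_H * A + J_S * S⁻¹ * H⁻¹ * A) * A⁻¹) := by
    rw [hTB, hJS, hPH]
    simp only [add_sub_cancel, mul_sub, sub_mul, mul_add, add_mul, one_mul, mul_one,
      Matrix.mul_smul, Matrix.smul_mul, Matrix.mul_assoc,
      Matrix.mul_nonsing_inv_cancel_left _ _ hSinv,
      Matrix.nonsing_inv_mul_cancel_left _ _ hHinv,
      Matrix.mul_nonsing_inv_cancel_left _ _ hAinv, hAc,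
      smul_sub, smul_add]
    abel
  -- vector part
  have hr := congrArg (fun X => X *ᵥ (b - A *ᵥ xh)) hMAIN
  have hd := congrArg (fun X => X *ᵥ Δr) hE1
  simp only [Matrix.sub_mulVec, Matrix.smul_mulVec, Matrix.one_mulVec] at hr
  rw [hxhp, hyh, hrh]
  simp only [Matrix.mulVec_add, Matrix.mulVec_smul, Matrix.mulVec_mulVec,
    Matrix.mulVec_sub, ← Matrix.mul_assoc] at *
  rw [← hd]
  linear_combination (norm := module) hr
end
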